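/- arXiv:1901.04113 — 3 statements merged into one kernel-verified Lean document; each statement's English description precedes it below -/
import Mathlib

section
/- Let (R,m) be an F-finite reduced Noetherian local ring of prime characteristic p. For each e ≥ 0 let D_e be a set of additive maps φ : R → R satisfying φ(r^{p^e}·x) = r·φ(x) for all r, x ∈ R, such that: D_0 is the set of all multiplication maps x ↦ r·x (r ∈ R); each D_e is closed under addition; φ ∈ D_e and ψ ∈ D_{e'} imply φ∘ψ ∈ D_{e+e'}; and D_e contains a nonzero map for some e ≥ 1 (so (R, D) is a Cartier algebra pair). Suppose T is an ideal of R such that T ∩ R^o ≠ ∅, φ(T) ⊆ T for every e and every φ ∈ D_e, and T ⊆ J for every ideal J with J ∩ R^o ≠ ∅ that satisfies φ(J) ⊆ J for all such φ (i.e., T = τ(R,D) is the smallest D-compatible ideal meeting R^o). Then T is a strong test ideal: T·(I*) = T·I for every ideal I of R. -/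
/-- The `q`-th Frobenius power `I^{[q]}` of an ideal `I`: the ideal generated by
the `q`-th powers of the elements of `I`. -/
def frobeniusPower {R : Type*} [CommRing R] (I : Ideal R) (q : ℕ) : Ideal R :=
  Ideal.span ((fun a => a ^ q) '' (I : Set R))

/-- `Rreg c` means `c ∈ R^o`, i.e. `c` avoids every minimal prime of `R`. -/
def Rreg {R : Type*} [CommRing R] (c : R) : Prop :=
  ∀ P ∈ minimalPrimes R, c ∉ P

/-- `x` lies in the tight closure `I*` of `I` (characteristic `p`):
there is `c ∈ R^o` with `c * x^(p^e) ∈ I^{[p^e]}` for all `e ≫ 0`. -/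
def InTightClosure {R : Type*} [CommRing R] (p : ℕ) (I : Ideal R) (x : R) : Prop :=
  ∃ c, Rreg c ∧ ∃ N : ℕ, ∀ e ≥ N, c * x ^ p ^ e ∈ frobeniusPower I (p ^ e)

/-- The tight closure `I*` of `I`, as an ideal: the span of the set of elements in the
tight closure (this set is already an ideal, so taking the span is harmless). -/
def tightClosure {R : Type*} [CommRing R] (p : ℕ) (I : Ideal R) : Ideal R :=
  Ideal.span {x | InTightClosure p I x}

/-!
Let `x ∈ I*`, with multiplier `c ∈ R^o`. The ideal `M` of those `y` with `x · φ(r y) ∈ T·I` for all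
`φ ∈ D` and `r ∈ R` is `D`-compatible, because `r · ψ(y) = ψ(r^q y)` and `D` is closed under
composition. The twist `x · φ(z) = φ(x^q z)` puts `K · T` into `M`, where `K` consists of the `y`
with `y x^q ∈ I^{[q]}` for every `q = p^e`. For each minimal prime `P`, `K ⊄ P`: it contains
`c x^{p^N}` if `x ∉ P`, and, `R` being reduced, an annihilator of `x` outside `P` if `x ∈ P`.
Prime avoidance over the finitely many minimal primes then makes `M` meet `R^o`, so minimality of
`T` gives `T ⊆ M`, that is `x T ⊆ T I`.
-/
section

variable {R : Type*} [CommRing R]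

theorem exists_notMem_mul_eq_zero_of_mem_minimalPrimes [IsReduced R] {P : Ideal R}
    (hP : P ∈ minimalPrimes R) {x : R} (hx : x ∈ P) : ∃ y ∉ P, y * x = 0 := by
  have := hP.1.1
  obtain ⟨n, hn⟩ : IsNilpotent (algebraMap R (Localization.AtPrime P) x) := by
    rw [← mem_nilradical, nilradical, Ideal.zero_eq_bot, ← Ideal.map_bot (f := algebraMap R _),
      IsLocalization.AtPrime.radical_map_of_mem_minimalPrimes _ P ⊥ hP]
    exact Ideal.mem_map_of_mem _ hx
  rw [← map_pow, IsLocalization.map_eq_zero_iff P.primeCompl] at hn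
  obtain ⟨⟨y, hy⟩, hyx : y * x ^ n = 0⟩ := hn
  refine ⟨y, hy, IsReduced.eq_zero _ ⟨n + 1, ?_⟩⟩
  rw [show (y * x) ^ (n + 1) = y ^ n * x * (y * x ^ n) by ring, hyx, mul_zero]

theorem exists_rreg_mem_of_forall_not_le [IsNoetherianRing R] {J : Ideal R}
    (hJ : ∀ P ∈ minimalPrimes R, ¬ J ≤ P) : ∃ c ∈ J, Rreg c := by
  have hcover : ¬ (J : Set R) ⊆ ⋃ P ∈ minimalPrimes R, (P : Set R) := by
    rw [Ideal.subset_union_prime_finite (minimalPrimes.finite_of_isNoetherianRing R) ⊥ ⊥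
      fun P hP _ _ => hP.1.1]
    exact fun ⟨P, hP, hle⟩ => hJ P hP hle
  obtain ⟨c, hcJ, hc⟩ := Set.not_subset.mp hcover
  exact ⟨c, hcJ, fun P hP hcP => hc (Set.mem_biUnion hP hcP)⟩

theorem rreg_one : Rreg (1 : R) :=
  fun P hP => P.ne_top_iff_one.mp hP.1.1.ne_top

theorem mem_frobeniusPower_of_mem {I : Ideal R} {a : R} (ha : a ∈ I) (q : ℕ) :
    a ^ q ∈ frobeniusPower I q :=
  Ideal.subset_span ⟨a, ha, rfl⟩

theorem le_tightClosure (p : ℕ) (I : Ideal R) : I ≤ tightClosure p I :=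
  fun a ha => Ideal.subset_span
    ⟨1, rreg_one, 0, fun e _ => (one_mul (a ^ p ^ e)).symm ▸ mem_frobeniusPower_of_mem ha _⟩

theorem frobeniusPower_pow_le_of_le {p : ℕ} (hp : p ≠ 0) (I : Ideal R) {e N : ℕ} (h : e ≤ N) :
    frobeniusPower I (p ^ N) ≤ frobeniusPower I (p ^ e) := by
  rw [frobeniusPower, Ideal.span_le]
  rintro _ ⟨a, ha, rfl⟩
  show a ^ p ^ N ∈ _
  rw [← Nat.sub_add_cancel h, pow_add, pow_mul']
  exact Ideal.pow_mem_of_mem _ (mem_frobeniusPower_of_mem ha _) _ (by positivity)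

def frobeniusColon (p : ℕ) (I : Ideal R) (x : R) : Ideal R where
  carrier := {y | ∀ e : ℕ, y * x ^ p ^ e ∈ frobeniusPower I (p ^ e)}
  add_mem' hy hz e := by rw [add_mul]; exact add_mem (hy e) (hz e)
  zero_mem' e := by rw [zero_mul]; exact zero_mem _
  smul_mem' r y hy e := by rw [smul_eq_mul, mul_assoc]; exact Ideal.mul_mem_left _ _ (hy e)

theorem frobeniusColon_not_le_of_inTightClosure [IsReduced R] {p : ℕ} (hp : p ≠ 0)
    {I : Ideal R} {x : R} (hx : InTightClosure p I x) {P : Ideal R} (hP : P ∈ minimalPrimes R) :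
    ¬ frobeniusColon p I x ≤ P := by
  obtain ⟨c, hc, N, hcN⟩ := hx
  have hPprime := hP.1.1
  by_cases hxP : x ∈ P
  · obtain ⟨y, hyP, hyx⟩ := exists_notMem_mul_eq_zero_of_mem_minimalPrimes hP hxP
    refine fun hle => hyP (hle fun e => ?_)
    have hvanish : y * x ^ p ^ e = 0 := by
      rw [← Nat.sub_add_cancel (Nat.one_le_pow e p (Nat.pos_of_ne_zero hp)), pow_succ',
        ← mul_assoc, hyx, zero_mul]
    rw [hvanish]
    exact zero_mem _
  · have hmem : c * x ^ p ^ N ∈ frobeniusColon p I x := by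
      intro e
      rcases le_total N e with hNe | heN
      · rw [mul_right_comm]
        exact Ideal.mul_mem_right _ _ (hcN e hNe)
      · exact Ideal.mul_mem_right _ _ (frobeniusPower_pow_le_of_le hp I heN (hcN N le_rfl))
    exact fun hle => hPprime.mul_notMem (hc P hP) (fun h => hxP (hPprime.mem_of_pow_mem _ h))
      (hle hmem)

section Cartier

variable (D : ℕ → Set (R →+ R))

def IsCartierCompatible (J : Ideal R) : Prop :=
  ∀ e : ℕ, ∀ φ ∈ D e, ∀ x ∈ J, φ x ∈ J

/-- The largest ideal `M` with `φ(M) ⊆ A` for all `φ ∈ D`; quantifying over the multiplier `r`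
makes it an ideal without any assumption on `D`. -/
def cartierInterior (A : Ideal R) : Ideal R where
  carrier := {y | ∀ e : ℕ, ∀ φ ∈ D e, ∀ r : R, φ (r * y) ∈ A}
  add_mem' hy hz e φ hφ r := by rw [mul_add, map_add]; exact add_mem (hy e φ hφ r) (hz e φ hφ r)
  zero_mem' e φ _ r := by rw [mul_zero, map_zero]; exact zero_mem _
  smul_mem' s y hy e φ hφ r := by rw [smul_eq_mul, ← mul_assoc]; exact hy e φ hφ (r * s)

variable {D}

theorem cartierInterior_le (hid : AddMonoidHom.id R ∈ D 0) (A : Ideal R) :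
    cartierInterior D A ≤ A :=
  fun y hy => by simpa using hy 0 _ hid 1

theorem isCartierCompatible_cartierInterior {p : ℕ}
    (htwist : ∀ e : ℕ, ∀ φ ∈ D e, ∀ r x : R, φ (r ^ p ^ e * x) = r * φ x)
    (hcomp : ∀ e e' : ℕ, ∀ φ ∈ D e, ∀ ψ ∈ D e', φ.comp ψ ∈ D (e + e')) (A : Ideal R) :
    IsCartierCompatible D (cartierInterior D A) := by
  intro e' ψ hψ y hy e φ hφ r
  rw [← htwist e' ψ hψ]
  exact hy (e + e') _ (hcomp e e' φ hφ ψ hψ) (r ^ p ^ e')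

theorem map_mul_mem_mul_of_mem_frobeniusPower {p e : ℕ} {φ : R →+ R}
    (htwist : ∀ r x : R, φ (r ^ p ^ e * x) = r * φ x) {T I : Ideal R} (hT : ∀ x ∈ T, φ x ∈ T)
    {z : R} (hz : z ∈ frobeniusPower I (p ^ e)) {t : R} (ht : t ∈ T) : φ (z * t) ∈ T * I := by
  induction hz using Submodule.span_induction generalizing t with
  | mem _ hg =>
    obtain ⟨a, ha, rfl⟩ := hg
    rw [htwist, mul_comm a]
    exact Ideal.mul_mem_mul (hT t ht) ha
  | zero => rw [zero_mul, map_zero]; exact zero_mem _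
  | add _ _ _ _ ih₁ ih₂ => rw [add_mul, map_add]; exact add_mem (ih₁ ht) (ih₂ ht)
  | smul r z _ ih =>
    rw [smul_eq_mul, mul_comm r, mul_assoc]
    exact ih (Ideal.mul_mem_left _ r ht)

theorem frobeniusColon_mul_le_cartierInterior {p : ℕ}
    (htwist : ∀ e : ℕ, ∀ φ ∈ D e, ∀ r x : R, φ (r ^ p ^ e * x) = r * φ x) {T : Ideal R}
    (hT : IsCartierCompatible D T) (I : Ideal R) (x : R) :
    frobeniusColon p I x * T ≤ cartierInterior D ((T * I).colon {x}) := by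
  refine Ideal.mul_le.2 fun k hk s hs e φ hφ r => Submodule.mem_colon_singleton.2 ?_
  rw [smul_eq_mul, mul_comm _ x, ← htwist e φ hφ,
    show x ^ p ^ e * (r * (k * s)) = k * x ^ p ^ e * (r * s) by ring]
  exact map_mul_mem_mul_of_mem_frobeniusPower (htwist e φ hφ) (hT e φ hφ) (hk e)
    (Ideal.mul_mem_left _ r hs)

theorem le_colon_of_inTightClosure [IsNoetherianRing R] [IsReduced R] {p : ℕ} (hp : p ≠ 0)
    (hid : AddMonoidHom.id R ∈ D 0)
    (htwist : ∀ e : ℕ, ∀ φ ∈ D e, ∀ r x : R, φ (r ^ p ^ e * x) = r * φ x)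
    (hcomp : ∀ e e' : ℕ, ∀ φ ∈ D e, ∀ ψ ∈ D e', φ.comp ψ ∈ D (e + e'))
    {T : Ideal R} (hTreg : ∃ c ∈ T, Rreg c) (hTcomp : IsCartierCompatible D T)
    (hTmin : ∀ J : Ideal R, (∃ c ∈ J, Rreg c) → IsCartierCompatible D J → T ≤ J)
    {I : Ideal R} {x : R} (hx : InTightClosure p I x) : T ≤ (T * I).colon {x} := by
  obtain ⟨t₀, ht₀, ht₀reg⟩ := hTreg
  have hMreg : ∃ c ∈ cartierInterior D ((T * I).colon {x}), Rreg c := by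
    refine exists_rreg_mem_of_forall_not_le fun P hP hle => ?_
    have hprod := (frobeniusColon_mul_le_cartierInterior htwist hTcomp I x).trans hle
    rcases hP.1.1.mul_le.1 hprod with hK | hT
    · exact frobeniusColon_not_le_of_inTightClosure hp hx hP hK
    · exact ht₀reg P hP (hT ht₀)
  exact (hTmin _ hMreg (isCartierCompatible_cartierInterior htwist hcomp _)).trans
    (cartierInterior_le hid _)

theorem tightClosure_le_colon [IsNoetherianRing R] [IsReduced R] {p : ℕ} (hp : p ≠ 0)
    (hid : AddMonoidHom.id R ∈ D 0)
    (htwist : ∀ e : ℕ, ∀ φ ∈ D e, ∀ r x : R, φ (r ^ p ^ e * x) = r * φ x)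
    (hcomp : ∀ e e' : ℕ, ∀ φ ∈ D e, ∀ ψ ∈ D e', φ.comp ψ ∈ D (e + e'))
    {T : Ideal R} (hTreg : ∃ c ∈ T, Rreg c) (hTcomp : IsCartierCompatible D T)
    (hTmin : ∀ J : Ideal R, (∃ c ∈ J, Rreg c) → IsCartierCompatible D J → T ≤ J)
    (I : Ideal R) : tightClosure p I ≤ (T * I).colon (T : Set R) :=
  Submodule.span_le.2 fun x hx => Submodule.mem_colon.2 fun t ht => by
    rw [smul_eq_mul, mul_comm x t]
    exact Submodule.mem_colon_singleton.1
      (le_colon_of_inTightClosure hp hid htwist hcomp hTreg hTcomp hTmin hx ht)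

end Cartier

end

theorem strong_test_ideal_of_cartier_algebra_general {R : Type*} [CommRing R] [IsNoetherianRing R]
    [IsReduced R] (p : ℕ) [Fact p.Prime]
    (D : ℕ → Set (R →+ R))
    (hDtwist : ∀ e : ℕ, ∀ φ ∈ D e, ∀ r x : R, φ (r ^ p ^ e * x) = r * φ x)
    (hD0 : D 0 = {φ : R →+ R | ∃ r : R, ∀ x : R, φ x = r * x})
    (hDcomp : ∀ e e' : ℕ, ∀ φ ∈ D e, ∀ ψ ∈ D e', φ.comp ψ ∈ D (e + e'))
    (T : Ideal R)
    (hTreg : ∃ c ∈ T, Rreg c)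
    (hTcomp : ∀ e : ℕ, ∀ φ ∈ D e, ∀ x ∈ T, φ x ∈ T)
    (hTmin : ∀ J : Ideal R, (∃ c ∈ J, Rreg c) →
      (∀ e : ℕ, ∀ φ ∈ D e, ∀ x ∈ J, φ x ∈ J) → T ≤ J) :
    ∀ I : Ideal R, T * tightClosure p I = T * I := by
  have hid : AddMonoidHom.id R ∈ D 0 := hD0 ▸ ⟨1, fun x => (one_mul x).symm⟩
  intro I
  have hle := tightClosure_le_colon (Fact.out : p.Prime).ne_zero hid hDtwist hDcomp hTreg hTcomp
    hTmin I
  refine le_antisymm (Ideal.mul_le.2 fun t ht y hy => ?_)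
    (Ideal.mul_mono_right (le_tightClosure p I))
  rw [mul_comm t y]
  exact Submodule.mem_colon.1 (hle hy) t ht

/-- If `(R, D)` is a Cartier algebra pair and `T = τ(R,D)` is the smallest
`D`-compatible ideal meeting `R^o`, then `T` is a strong test ideal. -/
theorem strong_test_ideal_of_cartier_algebra {R : Type*} [CommRing R] [IsNoetherianRing R]
    [IsLocalRing R] [IsReduced R] (p : ℕ) [Fact p.Prime] [CharP R p]
    (hFF : (frobenius R p).Finite)
    (D : ℕ → Set (R →+ R))
    (hDtwist : ∀ e : ℕ, ∀ φ ∈ D e, ∀ r x : R, φ (r ^ p ^ e * x) = r * φ x)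
    (hD0 : D 0 = {φ : R →+ R | ∃ r : R, ∀ x : R, φ x = r * x})
    (hDadd : ∀ e : ℕ, ∀ φ ∈ D e, ∀ ψ ∈ D e, φ + ψ ∈ D e)
    (hDcomp : ∀ e e' : ℕ, ∀ φ ∈ D e, ∀ ψ ∈ D e', φ.comp ψ ∈ D (e + e'))
    (hDne : ∃ e : ℕ, 1 ≤ e ∧ ∃ φ ∈ D e, φ ≠ 0)
    (T : Ideal R)
    (hTreg : ∃ c ∈ T, Rreg c)
    (hTcomp : ∀ e : ℕ, ∀ φ ∈ D e, ∀ x ∈ T, φ x ∈ T)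
    (hTmin : ∀ J : Ideal R, (∃ c ∈ J, Rreg c) →
      (∀ e : ℕ, ∀ φ ∈ D e, ∀ x ∈ J, φ x ∈ J) → T ≤ J) :
    ∀ I : Ideal R, T * tightClosure p I = T * I :=
  strong_test_ideal_of_cartier_algebra_general p D hDtwist hD0 hDcomp T hTreg hTcomp hTmin
end

section
/- Let R be a reduced Noetherian commutative ring of prime characteristic p, and let T be a strong test ideal of R (T ∩ R^o ≠ ∅ and T·(I*) = T·I for every ideal I) generated by n elements. Then R is n-tight: for every ideal I and every x ∈ I*, there exist a_1, …, a_n with a_i ∈ I^i and x^n + a_1·x^{n−1} + ⋯ + a_n = 0. -/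
/-! Write `T = (f₁, …, fₙ)`. For `x ∈ I*` the strong test ideal property puts each `x fᵢ` in
`T I`, so `x f = B f` for a matrix `B` with entries in `I`. By the determinant trick `χ_B(x)`
annihilates `T`, in particular some `c ∈ T ∩ R^o`; as `R` is reduced this forces `χ_B(x) = 0`,
and the coefficients of `χ_B` lie in the powers of `I` required for integral dependence. -/

open Matrix Polynomial Finset

theorem Rreg.eq_zero_of_mul_eq_zero {R : Type*} [CommRing R] [IsReduced R] {a c : R}
    (hc : Rreg c) (h : a * c = 0) : a = 0 := by
  have ha : a ∈ sInf (Ideal.minimalPrimes (⊥ : Ideal R)) := Submodule.mem_sInf.mpr fun P hP =>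
    (hP.1.1.mem_or_mem (h ▸ P.zero_mem)).resolve_right (hc P hP)
  rwa [Ideal.sInf_minimalPrimes, Ideal.radical_bot_of_isReduced] at ha

theorem Matrix.exists_mem_ideal_mulVec_eq_smul {R ι : Type*} [CommSemiring R] [Fintype ι]
    {I : Ideal R} {v : ι → R} {x : R} (h : ∀ i, x * v i ∈ I * Ideal.span (Set.range v)) :
    ∃ B : Matrix ι ι R, (∀ i j, B i j ∈ I) ∧ B *ᵥ v = x • v := by
  choose B hBI hB using fun i => (Submodule.mem_ideal_smul_span_iff_exists_sum I v _).mp (h i)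
  refine ⟨of fun i j => B i j, hBI, funext fun i => ?_⟩
  rw [Pi.smul_apply, smul_eq_mul, ← hB i, Finsupp.sum_fintype _ _ fun j => zero_smul R (v j)]
  rfl

theorem Matrix.eval_charpoly_mem_annihilator_of_mulVec_eq_smul {R ι : Type*} [CommRing R]
    [Fintype ι] [DecidableEq ι] {B : Matrix ι ι R} {v : ι → R} {x : R} (h : B *ᵥ v = x • v) :
    B.charpoly.eval x ∈ (Ideal.span (Set.range v)).annihilator := by
  have hker : (scalar ι x - B) *ᵥ v = 0 := by
    rw [sub_mulVec, h, scalar_apply, ← smul_one_eq_diagonal, smul_mulVec, one_mulVec, sub_self]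
  have hsmul : B.charpoly.eval x • v = 0 := by
    rw [eval_charpoly, ← one_mulVec v, ← smul_mulVec, ← adjugate_mul, ← mulVec_mulVec, hker,
      mulVec_zero]
  exact (Submodule.mem_annihilator_span _ _).mpr fun ⟨_, i, hi⟩ => hi ▸ congrFun hsmul i

theorem Polynomial.Monic.eval_eq_pow_add_sum_Icc {R : Type*} [Semiring R] {p : R[X]}
    (hp : p.Monic) (x : R) :
    p.eval x = x ^ p.natDegree +
      ∑ i ∈ Icc 1 p.natDegree, p.coeff (p.natDegree - i) * x ^ (p.natDegree - i) := by
  rw [eval_eq_sum_range, sum_range_succ, hp.coeff_natDegree, one_mul, add_comm,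
    ← sum_range_reflect, ← Ico_add_one_right_eq_Icc, sum_Ico_eq_sum_range, Nat.add_sub_cancel]
  congr 1
  refine sum_congr rfl fun k _ => ?_
  rw [Nat.sub_sub, add_comm 1 k]

theorem Matrix.exists_integral_dependence_of_eval_charpoly_eq_zero {R ι : Type*} [CommRing R]
    [Fintype ι] [DecidableEq ι] {I : Ideal R} {B : Matrix ι ι R} (hB : ∀ i j, B i j ∈ I)
    {x : R} (hx : B.charpoly.eval x = 0) :
    ∃ a : ℕ → R, (∀ i, 1 ≤ i → i ≤ Fintype.card ι → a i ∈ I ^ i) ∧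
      x ^ Fintype.card ι + ∑ i ∈ Icc 1 (Fintype.card ι), a i * x ^ (Fintype.card ι - i) = 0 := by
  rcases subsingleton_or_nontrivial R with _ | _
  · exact ⟨0, fun _ _ _ => zero_mem _, Subsingleton.elim _ _⟩
  have hdeg := charpoly_natDegree_eq_dim B
  refine ⟨fun i => B.charpoly.coeff (Fintype.card ι - i), fun i _ hi => ?_, ?_⟩
  · simpa only [Nat.sub_sub_self hi] using coeff_charpoly_mem_ideal_pow hB (Fintype.card ι - i)
  · rw [← hdeg, ← (charpoly_monic B).eval_eq_pow_add_sum_Icc, hx]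

theorem n_tight_of_strong_test_ideal_general {R : Type*} [CommRing R]
    [IsReduced R] (p : ℕ)
    (T : Ideal R) (n : ℕ)
    (hgen : ∃ f : Fin n → R, T = Ideal.span (Set.range f))
    (hTreg : ∃ c ∈ T, Rreg c)
    (hstrong : ∀ I : Ideal R, T * tightClosure p I = T * I) :
    ∀ I : Ideal R, ∀ x : R, InTightClosure p I x →
      ∃ a : ℕ → R, (∀ i, 1 ≤ i → i ≤ n → a i ∈ I ^ i) ∧
        x ^ n + ∑ i ∈ Finset.Icc 1 n, a i * x ^ (n - i) = 0 := by
  intro I x hx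
  obtain ⟨f, rfl⟩ := hgen
  obtain ⟨c, hcT, hc⟩ := hTreg
  have hxf : ∀ i, x * f i ∈ I * Ideal.span (Set.range f) := fun i => by
    rw [mul_comm x, mul_comm I, ← hstrong I]
    exact Ideal.mul_mem_mul (Ideal.subset_span ⟨i, rfl⟩) (Ideal.subset_span hx)
  obtain ⟨B, hBI, hBf⟩ := Matrix.exists_mem_ideal_mulVec_eq_smul hxf
  have heval : B.charpoly.eval x = 0 := hc.eq_zero_of_mul_eq_zero <|
    Submodule.mem_annihilator.mp (B.eval_charpoly_mem_annihilator_of_mulVec_eq_smul hBf) c hcT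
  simpa only [Fintype.card_fin] using
    Matrix.exists_integral_dependence_of_eval_charpoly_eq_zero hBI heval

/-- **Huneke.** If `R` has a strong test ideal generated by `n` elements,
then `R` is `n`-tight: every `x ∈ I*` satisfies a degree-`n` equation of integral
dependence over `I`. -/
theorem n_tight_of_strong_test_ideal {R : Type*} [CommRing R] [IsNoetherianRing R]
    [IsReduced R] (p : ℕ) [Fact p.Prime] [CharP R p]
    (T : Ideal R) (n : ℕ)
    (hgen : ∃ f : Fin n → R, T = Ideal.span (Set.range f))
    (hTreg : ∃ c ∈ T, Rreg c)
    (hstrong : ∀ I : Ideal R, T * tightClosure p I = T * I) :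
    ∀ I : Ideal R, ∀ x : R, InTightClosure p I x →
      ∃ a : ℕ → R, (∀ i, 1 ≤ i → i ≤ n → a i ∈ I ^ i) ∧
        x ^ n + ∑ i ∈ Finset.Icc 1 n, a i * x ^ (n - i) = 0 :=
  n_tight_of_strong_test_ideal_general p T n hgen hTreg hstrong
end

section
/- Let k be a perfect field of prime characteristic p, S = k[[x_1,…,x_n]], q = p^e with e ≥ 1, and z = (x_1·x_2⋯x_n)^{q−1}. Then a prime ideal P of S satisfies z·P ⊆ P^{[q]} if and only if P is generated by a (possibly empty) subset of the variables, i.e., P = (x_i : i ∈ A) for some A ⊆ {1,…,n}. (Equivalently: the Φ-compatible prime ideals of S, for the map Φ given by premultiplication by z composed with the trace map, are exactly the ideals generated by variables.) -/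
/-!
Write `q = p ^ e` and, for an exponent `b < q`, let the Cartier operator `C_b` send `f` to the
series whose `m`-th coefficient is the `q`-th root of the `(q • m + b)`-th coefficient of `f`.
Since `C_b (g ^ q * r) = g * C_b r`, every `C_b` maps `P^{[q]}` into `P`.

Suppose `z • P ⊆ P^{[q]}` and some `f ∈ P` has a nonzero coefficient at an exponent `m` involving
only variables outside `P`. Write `m = q • m' + b`. A suitable `C_c` sends `z * f` to
`x^ε * C_b f`, where `x^ε` is a product of variables outside `P`, so `C_b f ∈ P` has a nonzero
coefficient at the strictly smaller exponent `m'`. Descending we reach the constant term, so `f`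
would be a unit. Hence `P` is generated by the variables it contains. Conversely
`z * x_i = x_i ^ q * ∏_{j ≠ i} x_j ^ (q - 1)`.
-/

open MvPowerSeries

namespace Finsupp

variable {σ : Type*}

theorem smul_le_smul_add_iff {q : ℕ} {b u w : σ →₀ ℕ} (hb : ∀ i, b i < q) :
    q • u ≤ q • w + b ↔ u ≤ w := by
  simp only [le_def, add_apply, smul_apply, smul_eq_mul]
  refine forall_congr' fun i => ?_
  have hq : 0 < q := (Nat.zero_le _).trans_lt (hb i)
  rw [mul_comm, ← Nat.le_div_iff_mul_le hq, Nat.mul_add_div hq, Nat.div_eq_of_lt (hb i), add_zero]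

theorem smul_mapRange_div_add_mapRange_mod (q : ℕ) (m : σ →₀ ℕ) :
    q • m.mapRange (· / q) (Nat.zero_div q) + m.mapRange (· % q) (Nat.zero_mod q) = m :=
  ext fun i => Nat.div_add_mod (m i) q

theorem mapRange_div_lt {q : ℕ} (hq : 1 < q) {m : σ →₀ ℕ} (hm : m ≠ 0) :
    m.mapRange (· / q) (Nat.zero_div q) < m := by
  obtain ⟨i, hi⟩ := ne_iff.1 hm
  refine lt_of_le_of_ne (fun j => Nat.div_le_self _ _) fun h => ?_
  exact (Nat.div_lt_self (Nat.pos_of_ne_zero hi) hq).ne (DFunLike.congr_fun h i)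

end Finsupp

namespace MvPowerSeries

variable {σ R : Type*}

section Decimation

variable {q : ℕ}

section Semiring

variable [Semiring R]

noncomputable def decimation (q : ℕ) (b : σ →₀ ℕ) : MvPowerSeries σ R →+ MvPowerSeries σ R where
  toFun f m := coeff (q • m + b) f
  map_zero' := rfl
  map_add' _ _ := rfl

theorem coeff_decimation (b m : σ →₀ ℕ) (f : MvPowerSeries σ R) :
    coeff m (decimation q b f) = coeff (q • m + b) f :=
  rfl

theorem decimation_monomial_mul {b c d ε : σ →₀ ℕ} (hb : ∀ i, b i < q) (h : d + b = q • ε + c)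
    (a : R) (f : MvPowerSeries σ R) :
    decimation q c (monomial d a * f) = monomial ε a * decimation q b f := by
  ext w
  rw [coeff_decimation, coeff_monomial_mul, coeff_monomial_mul, coeff_decimation]
  have hle : d ≤ q • w + c ↔ ε ≤ w := by
    rw [← add_le_add_iff_right b, h, add_right_comm, add_le_add_iff_right,
      Finsupp.smul_le_smul_add_iff hb]
  by_cases hεw : ε ≤ w
  · rw [if_pos (hle.2 hεw), if_pos hεw, tsub_eq_of_eq_add]
    calc q • w + c = q • (w - ε) + (q • ε + c) := by
          rw [← add_assoc, ← smul_add, tsub_add_cancel_of_le hεw]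
      _ = q • (w - ε) + b + d := by rw [← h]; abel
  · rw [if_neg (mt hle.1 hεw), if_neg hεw]

end Semiring

variable [CommRing R]

theorem coeff_expand_eq_zero (hq : q ≠ 0) {u : σ →₀ ℕ} (hu : ∀ u', u ≠ q • u')
    (g : MvPowerSeries σ R) : coeff u (expand q hq g) = 0 := by
  obtain ⟨i, hi⟩ : ∃ i, ¬ q ∣ u i := by
    by_contra! h
    exact hu (u.mapRange (· / q) (Nat.zero_div q))
      (Finsupp.ext fun i => by simp [Nat.mul_div_cancel' (h i)])
  exact coeff_expand_of_not_dvd q hq g hi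

theorem decimation_expand_mul (hq : q ≠ 0) {b : σ →₀ ℕ} (hb : ∀ i, b i < q)
    (g r : MvPowerSeries σ R) :
    decimation q b (expand q hq g * r) = g * decimation q b r := by
  classical
  ext m
  rw [coeff_decimation, coeff_mul, coeff_mul]
  symm
  refine Finset.sum_of_injOn (fun x => (q • x.1, q • x.2 + b)) ?_ ?_ ?_ ?_
  · rintro ⟨u, v⟩ - ⟨u', v'⟩ - h
    simp only [Prod.mk.injEq, add_left_inj, nsmul_right_inj hq] at h
    exact Prod.ext h.1 h.2
  · rintro ⟨u, v⟩ h
    simp only [Finset.mem_coe, Finset.HasAntidiagonal.mem_antidiagonal] at h ⊢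
    rw [← h, smul_add, add_assoc]
  · rintro ⟨u, v⟩ huv hnot
    rw [Finset.HasAntidiagonal.mem_antidiagonal] at huv
    by_cases hu : ∀ u', u ≠ q • u'
    · rw [coeff_expand_eq_zero hq hu, zero_mul]
    obtain ⟨u', rfl⟩ := not_forall_not.1 hu
    have hu'm : u' ≤ m := (Finsupp.smul_le_smul_add_iff hb).1 (huv ▸ le_self_add)
    refine absurd ⟨(u', m - u'), by simp [add_tsub_cancel_of_le hu'm], ?_⟩ hnot
    refine Prod.ext rfl (add_left_cancel (huv.trans ?_)).symm
    rw [← add_assoc, ← smul_add, add_tsub_cancel_of_le hu'm]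
  · rintro ⟨u, w⟩ -
    rw [coeff_expand_smul, coeff_decimation]

end Decimation

section Cartier

variable [CommRing R] (p : ℕ) [ExpChar R p] [PerfectRing R p] {e : ℕ} {b : σ →₀ ℕ}

noncomputable def cartier (e : ℕ) (b : σ →₀ ℕ) : MvPowerSeries σ R →+ MvPowerSeries σ R :=
  (map (iterateFrobeniusEquiv R p e).symm.toRingHom).toAddMonoidHom.comp (decimation (p ^ e) b)

theorem cartier_apply (f : MvPowerSeries σ R) :
    cartier p e b f = map (iterateFrobeniusEquiv R p e).symm.toRingHom (decimation (p ^ e) b f) :=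
  rfl

theorem coeff_cartier (m : σ →₀ ℕ) (f : MvPowerSeries σ R) :
    coeff m (cartier p e b f) = (iterateFrobeniusEquiv R p e).symm (coeff (p ^ e • m + b) f) :=
  rfl

theorem cartier_pow_mul (hb : ∀ i, b i < p ^ e) (g r : MvPowerSeries σ R) :
    cartier p e b (g ^ p ^ e * r) = g * cartier p e b r := by
  have hid : (iterateFrobeniusEquiv R p e).symm.toRingHom.comp (iterateFrobenius R p e) =
      RingHom.id R :=
    RingHom.ext (iterateFrobeniusEquiv R p e).symm_apply_apply
  rw [← map_iterateFrobenius_expand p (expChar_ne_zero R p) g e, map_expand, cartier_apply,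
    cartier_apply, decimation_expand_mul _ hb, map_mul, map_map, hid, map_id, RingHom.id_apply]

theorem cartier_monomial_mul {c d ε : σ →₀ ℕ} (hb : ∀ i, b i < p ^ e) (h : d + b = p ^ e • ε + c)
    (f : MvPowerSeries σ R) :
    cartier p e c (monomial d 1 * f) = monomial ε 1 * cartier p e b f := by
  rw [cartier_apply, cartier_apply, decimation_monomial_mul hb h, map_mul, map_monomial, map_one]

theorem cartier_mem_of_mem_frobeniusPower {P : Ideal (MvPowerSeries σ R)} (hb : ∀ i, b i < p ^ e)
    {g : MvPowerSeries σ R} (hg : g ∈ frobeniusPower P (p ^ e)) : cartier p e b g ∈ P := by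
  obtain ⟨N, r, a, rfl⟩ := Submodule.mem_span_set'.1 hg
  rw [map_sum]
  refine Ideal.sum_mem _ fun i _ => ?_
  obtain ⟨x, hx, hxa⟩ := (a i).2
  rw [smul_eq_mul, mul_comm, ← hxa, cartier_pow_mul p hb]
  exact Ideal.mul_mem_right _ _ hx

end Cartier

section Monomials

variable [CommSemiring R]

theorem monomial_one_notMem {P : Ideal (MvPowerSeries σ R)} (hP : P.IsPrime) {ε : σ →₀ ℕ}
    (h : ∀ i, ε i ≠ 0 → X i ∉ P) : monomial ε (1 : R) ∉ P := by
  rw [monomial_one_eq, Finsupp.prod]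
  intro hmem
  obtain ⟨i, hi, hXi⟩ := hP.prod_mem_iff.1 hmem
  exact h i (Finsupp.mem_support_iff.1 hi) (hP.mem_of_pow_mem _ hXi)

theorem prod_X_pow_eq_monomial [Fintype σ] (t : ℕ) :
    (∏ i, X i : MvPowerSeries σ R) ^ t = monomial (∑ i, Finsupp.single i t) 1 := by
  simp_rw [← Finset.prod_pow, X_pow_eq, prod_monomial, Finset.prod_const_one]

end Monomials

section SpanX

variable [CommRing R]

theorem mem_ideal_span_X_image_of_coeff_eq_zero {A : Finset σ} {f : MvPowerSeries σ R}
    (h : ∀ m : σ →₀ ℕ, (∀ i ∈ A, m i = 0) → coeff m f = 0) :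
    f ∈ Ideal.span (X '' (A : Set σ)) := by
  classical
  induction A using Finset.induction_on generalizing f with
  | empty =>
    rw [show f = 0 from ext fun m => h m (by simp)]
    exact zero_mem _
  | insert i A hi ih =>
    let f₀ : MvPowerSeries σ R := fun m => if m i = 0 then coeff m f else 0
    have hf₀ : f₀ ∈ Ideal.span (X '' (A : Set σ)) := ih fun m hm => by
      by_cases hmi : m i = 0
      · exact (if_pos hmi).trans (h m ((Finset.forall_mem_insert _ _ _).2 ⟨hmi, hm⟩))
      · exact if_neg hmi
    obtain ⟨g, hg⟩ : X i ∣ f - f₀ := X_dvd_iff.2 fun m hmi => by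
      rw [map_sub]
      exact sub_eq_zero.2 (if_pos hmi).symm
    rw [← sub_add_cancel f f₀, hg]
    exact add_mem (Ideal.mul_mem_right _ _ (Ideal.subset_span ⟨i, by simp, rfl⟩))
      (Ideal.span_mono (Set.image_mono (by simp)) hf₀)

theorem prod_X_pow_sub_one_mul_mem_frobeniusPower [Fintype σ] (A : Set σ) {q : ℕ} (hq : q ≠ 0)
    {f : MvPowerSeries σ R} (hf : f ∈ Ideal.span (X '' A)) :
    (∏ i, X i) ^ (q - 1) * f ∈ frobeniusPower (Ideal.span (X '' A)) q := by
  refine Submodule.span_induction ?_ (by simp)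
    (fun _ _ _ _ hx hy => by rw [mul_add]; exact add_mem hx hy)
    (fun a _ _ hx => by rw [smul_eq_mul, mul_left_comm]; exact Ideal.mul_mem_left _ a hx) hf
  rintro _ ⟨i, hi, rfl⟩
  obtain ⟨c, hc⟩ : (X i : MvPowerSeries σ R) ^ q ∣ (∏ j, X j) ^ (q - 1) * X i := by
    rw [← pow_sub_one_mul hq]
    exact mul_dvd_mul_right (pow_dvd_pow_of_dvd (Finset.dvd_prod_of_mem _ (Finset.mem_univ i)) _) _
  rw [hc]
  exact Ideal.mul_mem_right _ _ (Ideal.subset_span ⟨X i, Ideal.subset_span ⟨i, hi, rfl⟩, rfl⟩)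

end SpanX

theorem coeff_eq_zero_of_mem_of_compatible {k : Type*} [Field k] (p : ℕ) [ExpChar k p]
    [PerfectRing k p] [Fintype σ] {e : ℕ} (hq : 1 < p ^ e) {P : Ideal (MvPowerSeries σ k)}
    (hP : P.IsPrime) (hcomp : ∀ f ∈ P, (∏ i, X i) ^ (p ^ e - 1) * f ∈ frobeniusPower P (p ^ e))
    {f : MvPowerSeries σ k} (hf : f ∈ P) {m : σ →₀ ℕ} (hm : ∀ i, X i ∈ P → m i = 0) :
    coeff m f = 0 := by
  induction m using WellFoundedLT.induction generalizing f with | ind m ih => ?_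
  obtain rfl | hm0 := eq_or_ne m 0
  · by_contra hf0
    rw [coeff_zero_eq_constantCoeff_apply] at hf0
    exact hP.ne_top (P.eq_top_of_isUnit_mem hf
      (isUnit_iff_constantCoeff.2 (isUnit_iff_ne_zero.2 hf0)))
  have hmod : ∀ n : σ →₀ ℕ, ∀ i, n.mapRange (· % p ^ e) (Nat.zero_mod _) i < p ^ e :=
    fun n i => Nat.mod_lt _ (by omega)
  set b := m.mapRange (· % p ^ e) (Nat.zero_mod _)
  -- Use the base-`q` digits `c = D % q` and `ε = D / q` of `D`; as every entry of `D` lies in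
  -- `[q - 1, 2q - 2]`, `ε` is the indicator of the support of `b`.
  set D := (∑ i, Finsupp.single i (p ^ e - 1)) + b
  have hD : ∀ i, D i = p ^ e - 1 + b i := fun i => by simp [D, -Finsupp.single_tsub]
  have hzf : monomial (D.mapRange (· / p ^ e) (Nat.zero_div _)) 1 * cartier p e b f ∈ P := by
    rw [← cartier_monomial_mul p (hmod m) (Finsupp.smul_mapRange_div_add_mapRange_mod _ D).symm,
      ← prod_X_pow_eq_monomial]
    exact cartier_mem_of_mem_frobeniusPower p (hmod D) (hcomp f hf)
  have hε : monomial (D.mapRange (· / p ^ e) (Nat.zero_div _)) (1 : k) ∉ P :=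
    monomial_one_notMem hP fun i hi hXi => hi <| by
      rw [Finsupp.mapRange_apply, hD, show b i = 0 by simp [b, hm i hXi], add_zero]
      exact Nat.div_eq_of_lt (by omega)
  have hcart : cartier p e b f ∈ P := (hP.mem_or_mem hzf).resolve_left hε
  have := ih _ (Finsupp.mapRange_div_lt hq hm0) hcart fun i hi => by simp [hm i hi]
  rwa [coeff_cartier, Finsupp.smul_mapRange_div_add_mapRange_mod,
    EmbeddingLike.map_eq_zero_iff] at this

end MvPowerSeries

/-- For `z = (x₁⋯xₙ)^{q−1}` in `S = k[[x₁,…,xₙ]]`, a prime ideal `P`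
satisfies `z·P ⊆ P^{[q]}` iff `P` is generated by a (possibly empty) subset of the
variables. -/
theorem compatible_primes_are_generated_by_variables {k : Type*} [Field k] (p : ℕ)
    [Fact p.Prime] [CharP k p] [PerfectRing k p] (n : ℕ) (e q : ℕ) (he : 1 ≤ e)
    (hq : q = p ^ e)
    (P : Ideal (MvPowerSeries (Fin n) k)) (hP : P.IsPrime) :
    (∀ f ∈ P,
        (∏ i : Fin n, (MvPowerSeries.X i : MvPowerSeries (Fin n) k)) ^ (q - 1) * f ∈
          frobeniusPower P q) ↔
      ∃ A : Finset (Fin n),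
        P = Ideal.span ((fun i => (MvPowerSeries.X i : MvPowerSeries (Fin n) k)) ''
          (A : Set (Fin n))) := by
  subst hq
  have hp : p.Prime := Fact.out
  constructor
  · intro hcomp
    classical
    refine ⟨Finset.univ.filter (X · ∈ P), le_antisymm (fun f hf => ?_) ?_⟩
    · refine mem_ideal_span_X_image_of_coeff_eq_zero fun m hm => ?_
      exact coeff_eq_zero_of_mem_of_compatible p (Nat.one_lt_pow (by omega) hp.one_lt) hP hcomp
        hf fun i hXi => hm i (by simpa using hXi)
    · rw [Ideal.span_le]
      rintro _ ⟨i, hi, rfl⟩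
      simpa using hi
  · rintro ⟨A, rfl⟩ f hf
    exact prod_X_pow_sub_one_mul_mem_frobeniusPower _ (pow_ne_zero _ hp.ne_zero) hf
end
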